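/- arXiv:1907.09150 — 2 statements merged into one kernel-verified Lean document; each statement's English description precedes it below -/
import Mathlib

section
/- Let P(x) = f(x) + g(x) on ℝ^d, where f is linear (f(x) = ⟨c, x⟩ for some c) and g is μ_g-strongly convex. Fix α > 0, a vector v ∈ ℝ^d, and points x, y ∈ ℝ^d, and let x⁺ = argmin_w { g(w) + (1/(2α))‖w − x + αv‖² }. Then P(y) ≥ P(x⁺) + (1/α)⟨x − x⁺, y − x⟩ + ⟨v − c, x⁺ − y⟩ + (1/α)‖x − x⁺‖² + (μ_g/2)‖y − x⁺‖². -/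
/-!
The function `Φ w = g w + ‖w - (x - α v)‖² / (2α)` minimised by `x⁺` is `(μ_g + 1/α)`-strongly
convex, and a strongly convex function grows at least quadratically away from its minimiser:
`Φ y ≥ Φ x⁺ + (μ_g + 1/α)/2 ‖y - x⁺‖²`. Expanding the squares turns this into the three-point
inequality `g y ≥ g x⁺ + (1/α)⟪x⁺ - x + α v, x⁺ - y⟫ + μ_g/2 ‖y - x⁺‖²`, and adding the linear
part `⟪c, ·⟫` to both sides gives the bound.
-/

open Set Filter Topology

section NormedSpace

variable {E : Type*} [NormedAddCommGroup E] [NormedSpace ℝ E]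

/-- Testing minimality of `x` on the segment towards `y` gives `f x + (1 - t) φ ‖x - y‖ ≤ f y`
for `t ∈ (0, 1)`; let `t → 0`. -/
theorem UniformConvexOn.add_le_of_isMinOn {s : Set E} {φ : ℝ → ℝ} {f : E → ℝ} {x y : E}
    (hf : UniformConvexOn s φ f) (hmin : IsMinOn f s x) (hx : x ∈ s) (hy : y ∈ s) :
    f x + φ ‖x - y‖ ≤ f y := by
  have hseg : ∀ t ∈ Ioo (0 : ℝ) 1, f x + (1 - t) * φ ‖x - y‖ ≤ f y := by
    rintro t ⟨ht0, ht1⟩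
    have hconv := hf.2 hx hy (sub_nonneg.2 ht1.le) ht0.le (sub_add_cancel 1 t)
    have hle : f x ≤ f ((1 - t) • x + t • y) :=
      hmin (hf.1 hx hy (sub_nonneg.2 ht1.le) ht0.le (sub_add_cancel 1 t))
    simp only [smul_eq_mul] at hconv
    refine le_of_mul_le_mul_left ?_ ht0
    linear_combination hle + hconv
  have hlim : Tendsto (fun t : ℝ ↦ f x + (1 - t) * φ ‖x - y‖) (𝓝[>] 0)
      (𝓝 (f x + φ ‖x - y‖)) := by
    have hcont : Continuous fun t : ℝ ↦ f x + (1 - t) * φ ‖x - y‖ := by fun_prop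
    exact tendsto_nhdsWithin_of_tendsto_nhds (hcont.tendsto' 0 _ (by simp))
  exact le_of_tendsto hlim (eventually_of_mem (Ioo_mem_nhdsGT one_pos) hseg)

end NormedSpace

section InnerProductSpace

variable {E : Type*} [NormedAddCommGroup E] [InnerProductSpace ℝ E]

open scoped RealInnerProductSpace

/-- The strong convexity inequality holds with equality for this quadratic. -/
theorem strongConvexOn_univ_mul_norm_sub_sq (m : ℝ) (z : E) :
    StrongConvexOn univ m fun w ↦ m / 2 * ‖w - z‖ ^ 2 := by
  refine ⟨convex_univ, fun u _ v _ a b _ _ hab ↦ le_of_eq ?_⟩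
  obtain rfl : b = 1 - a := by linarith
  have hsplit : a • u + (1 - a) • v - z = a • (u - z) + (1 - a) • (v - z) := by module
  dsimp only
  rw [hsplit, show u - v = (u - z) - (v - z) by abel]
  simp only [smul_eq_mul, ← real_inner_self_eq_norm_sq, inner_add_left, inner_add_right,
    inner_sub_left, inner_sub_right, real_inner_smul_left, real_inner_smul_right]
  ring

theorem StrongConvexOn.three_point_of_isMinOn_prox {g : E → ℝ} {μ α : ℝ} {z xp : E}
    (hg : StrongConvexOn univ μ g)
    (hxp : IsMinOn (fun w ↦ g w + 1 / (2 * α) * ‖w - z‖ ^ 2) univ xp) (y : E) :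
    g xp + α⁻¹ * ⟪xp - z, xp - y⟫ + μ / 2 * ‖y - xp‖ ^ 2 ≤ g y := by
  have hquad : StrongConvexOn univ α⁻¹ fun w ↦ 1 / (2 * α) * ‖w - z‖ ^ 2 := by
    convert strongConvexOn_univ_mul_norm_sub_sq α⁻¹ z using 3
    ring
  have hgrowth := (hg.add hquad).add_le_of_isMinOn hxp (mem_univ xp) (mem_univ y)
  have hexpand : ‖y - z‖ ^ 2 = ‖xp - z‖ ^ 2 - 2 * ⟪xp - z, xp - y⟫ + ‖xp - y‖ ^ 2 := by
    rw [← norm_sub_sq_real, sub_sub_sub_cancel_left, ← neg_sub, norm_neg]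
  simp only [Pi.add_apply, hexpand] at hgrowth
  rw [norm_sub_rev y xp]
  linear_combination hgrowth

end InnerProductSpace

theorem prox_linear_strongly_convex_bound_general {d : ℕ}
    (c : EuclideanSpace ℝ (Fin d)) (g : EuclideanSpace ℝ (Fin d) → ℝ)
    (μg : ℝ)
    (hg : StrongConvexOn Set.univ μg g)
    (α : ℝ) (hα : 0 < α)
    (v x y xp : EuclideanSpace ℝ (Fin d))
    (hxp : ∀ w : EuclideanSpace ℝ (Fin d),
      g xp + 1 / (2 * α) * ‖xp - (x - α • v)‖ ^ 2
        ≤ g w + 1 / (2 * α) * ‖w - (x - α • v)‖ ^ 2) :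
    ((inner ℝ c y : ℝ) + g y)
      ≥ ((inner ℝ c xp : ℝ) + g xp)
        + (1 / α) * (inner ℝ (x - xp) (y - x) : ℝ)
        + (inner ℝ (v - c) (xp - y) : ℝ)
        + (1 / α) * ‖x - xp‖ ^ 2
        + μg / 2 * ‖y - xp‖ ^ 2 := by
  have hthree := hg.three_point_of_isMinOn_prox (isMinOn_univ_iff.2 hxp) y
  have hprox_dir : α⁻¹ * inner ℝ (xp - (x - α • v)) (xp - y)
      = 1 / α * inner ℝ (x - xp) (y - x) + inner ℝ v (xp - y) + 1 / α * ‖x - xp‖ ^ 2 := by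
    have hsplit : xp - (x - α • v) = α • v - (x - xp) := by abel
    have hdir : xp - y = -((x - xp) + (y - x)) := by abel
    rw [hsplit, hdir]
    simp only [inner_neg_right, inner_add_right, inner_sub_left (α • v) (x - xp),
      real_inner_smul_left, real_inner_self_eq_norm_sq]
    field_simp
    ring
  simp only [inner_sub_left, inner_sub_right] at hthree hprox_dir ⊢
  linarith

/-- Lemma 1 (adjusted Lemma 3 of Xiao–Zhang): for `P = f + g` with `f` linear
(`f x = ⟪c, x⟫`) and `g` `μg`-strongly convex, `α > 0`, and `x⁺` the proximal point
`prox_{αg}(x − αv)`, one has the stated lower bound on `P y`. -/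
theorem prox_linear_strongly_convex_bound {d : ℕ}
    (c : EuclideanSpace ℝ (Fin d)) (g : EuclideanSpace ℝ (Fin d) → ℝ)
    (μg : ℝ) (hμg : 0 ≤ μg)
    (hg : StrongConvexOn Set.univ μg g)
    (α : ℝ) (hα : 0 < α)
    (v x y xp : EuclideanSpace ℝ (Fin d))
    (hxp : ∀ w : EuclideanSpace ℝ (Fin d),
      g xp + 1 / (2 * α) * ‖xp - (x - α • v)‖ ^ 2
        ≤ g w + 1 / (2 * α) * ‖w - (x - α • v)‖ ^ 2) :
    ((inner ℝ c y : ℝ) + g y)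
      ≥ ((inner ℝ c xp : ℝ) + g xp)
        + (1 / α) * (inner ℝ (x - xp) (y - x) : ℝ)
        + (inner ℝ (v - c) (xp - y) : ℝ)
        + (1 / α) * ‖x - xp‖ ^ 2
        + μg / 2 * ‖y - xp‖ ^ 2 :=
  prox_linear_strongly_convex_bound_general c g μg hg α hα v x y xp hxp
end

section
/- Let f_0, …, f_{n−1} : ℝ^d → ℝ^ℓ each be B_f-Lipschitz, and set f̄(θ) = (1/n)∑_{j} f_j(θ). If J is a uniformly random index in {0,…,n−1}, then for any θ, θ̃ ∈ ℝ^d the SVRG correction term satisfies E‖f_J(θ) − f_J(θ̃) + f̄(θ̃) − f̄(θ)‖² ≤ 2 B_f² (1 − 1/n) ‖θ − θ̃‖². -/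
/-!
Write `g j = f_j(θ) − f_j(θ̃)`. The correction term is `g_J` minus its mean, and the variance of a
finite family of vectors is half the mean squared pairwise distance,
`(1/n) ∑ᵢ ‖gᵢ − ḡ‖² = (1/2n²) ∑ᵢ ∑ⱼ ‖gᵢ − gⱼ‖²`. Only the `n(n − 1)` off-diagonal pairs
contribute, and each is at most `(2 B_f ‖θ − θ̃‖)²` by the triangle inequality and the Lipschitz
bound.
-/

open Finset

theorem sum_sum_le_card_mul_card_sub_one_mul {ι R : Type*} [Fintype ι] [CommRing R]
    [PartialOrder R] [IsOrderedRing R] {h : ι → ι → R} {c : R}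
    (hdiag : ∀ i, h i i = 0) (hle : ∀ i j, h i j ≤ c) :
    ∑ i, ∑ j, h i j ≤ Fintype.card ι * (Fintype.card ι - 1) * c := by
  classical
  have hrow : ∀ i, ∑ j, h i j ≤ (Fintype.card ι - 1) * c := fun i => calc
    ∑ j, h i j = ∑ j ∈ univ.erase i, h i j := (sum_erase _ (hdiag i)).symm
    _ ≤ #(univ.erase i) • c := sum_le_card_nsmul _ _ _ fun j _ => hle i j
    _ = (Fintype.card ι - 1) * c := by
      rw [card_erase_of_mem (mem_univ i), card_univ, nsmul_eq_mul,
        Nat.cast_pred (Fintype.card_pos_iff.mpr ⟨i⟩)]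
  calc ∑ i, ∑ j, h i j ≤ ∑ _i : ι, (Fintype.card ι - 1) * c := sum_le_sum fun i _ => hrow i
    _ = Fintype.card ι * (Fintype.card ι - 1) * c := by
      rw [sum_const, card_univ, nsmul_eq_mul, mul_assoc]

section InnerProductSpace

variable {ι E : Type*} [Fintype ι] [NormedAddCommGroup E] [InnerProductSpace ℝ E]

theorem sum_sum_norm_sub_sq (g : ι → E) :
    ∑ i, ∑ j, ‖g i - g j‖ ^ 2
      = 2 * Fintype.card ι * ∑ i, ‖g i‖ ^ 2 - 2 * ‖∑ i, g i‖ ^ 2 := by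
  have hinner : ∑ i, ∑ j, inner ℝ (g i) (g j) = ‖∑ i, g i‖ ^ 2 := by
    simp_rw [← inner_sum, ← sum_inner, real_inner_self_eq_norm_sq]
  simp only [norm_sub_sq_real, sum_add_distrib, sum_sub_distrib, sum_const, card_univ,
    nsmul_eq_mul, ← mul_sum, hinner]
  ring

theorem sum_norm_sub_average_sq [Nonempty ι] (g : ι → E) :
    ∑ i, ‖g i - (Fintype.card ι : ℝ)⁻¹ • ∑ j, g j‖ ^ 2
      = ∑ i, ‖g i‖ ^ 2 - (Fintype.card ι : ℝ)⁻¹ * ‖∑ i, g i‖ ^ 2 := by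
  have hn : (Fintype.card ι : ℝ) ≠ 0 := Nat.cast_ne_zero.mpr Fintype.card_ne_zero
  have hinner : ∑ i, inner ℝ (g i) (∑ j, g j) = ‖∑ i, g i‖ ^ 2 := by
    rw [← sum_inner, real_inner_self_eq_norm_sq]
  simp only [norm_sub_sq_real, real_inner_smul_right, norm_smul, Real.norm_eq_abs,
    abs_inv, Nat.abs_cast, sum_add_distrib, sum_sub_distrib, sum_const, card_univ,
    nsmul_eq_mul, ← mul_sum, hinner]
  field_simp
  ring

theorem inv_card_mul_sum_norm_sub_average_sq_le (g : ι → E) {c : ℝ}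
    (hg : ∀ i j, ‖g i - g j‖ ≤ c) :
    (Fintype.card ι : ℝ)⁻¹ * ∑ i, ‖g i - (Fintype.card ι : ℝ)⁻¹ • ∑ j, g j‖ ^ 2
      ≤ (1 - (Fintype.card ι : ℝ)⁻¹) * c ^ 2 / 2 := by
  rcases isEmpty_or_nonempty ι with hι | hι
  · simp only [Fintype.card_eq_zero, univ_eq_empty, sum_empty, mul_zero]
    positivity
  set n : ℝ := (Fintype.card ι : ℝ)
  have hn : 0 < n := Nat.cast_pos.mpr Fintype.card_pos
  have hpairs : ∑ i, ∑ j, ‖g i - g j‖ ^ 2 ≤ n * (n - 1) * c ^ 2 :=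
    sum_sum_le_card_mul_card_sub_one_mul (fun i => by simp)
      fun i j => pow_le_pow_left₀ (norm_nonneg _) (hg i j) 2
  have hvar : n⁻¹ * ∑ i, ‖g i - n⁻¹ • ∑ j, g j‖ ^ 2
      = (2 * n ^ 2)⁻¹ * ∑ i, ∑ j, ‖g i - g j‖ ^ 2 := by
    rw [sum_norm_sub_average_sq, sum_sum_norm_sub_sq]
    field_simp
    ring
  calc n⁻¹ * ∑ i, ‖g i - n⁻¹ • ∑ j, g j‖ ^ 2
      ≤ (2 * n ^ 2)⁻¹ * (n * (n - 1) * c ^ 2) := by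
        rw [hvar]
        gcongr
    _ = (1 - n⁻¹) * c ^ 2 / 2 := by
        field_simp

end InnerProductSpace

theorem svrg_correction_variance_bound_general {d l n : ℕ}
    (f : Fin n → EuclideanSpace ℝ (Fin d) → EuclideanSpace ℝ (Fin l))
    (Bf : ℝ)
    (hLip : ∀ (j : Fin n) (θ₁ θ₂ : EuclideanSpace ℝ (Fin d)),
      ‖f j θ₁ - f j θ₂‖ ≤ Bf * ‖θ₁ - θ₂‖)
    (θ θt : EuclideanSpace ℝ (Fin d)) :
    (n : ℝ)⁻¹ * ∑ j : Fin n,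
        ‖f j θ - f j θt + (n : ℝ)⁻¹ • ∑ i : Fin n, f i θt
          - (n : ℝ)⁻¹ • ∑ i : Fin n, f i θ‖ ^ 2
      ≤ 2 * Bf ^ 2 * (1 - (n : ℝ)⁻¹) * ‖θ - θt‖ ^ 2 := by
  set g : Fin n → EuclideanSpace ℝ (Fin l) := fun j => f j θ - f j θt
  have hcentred : ∀ j, f j θ - f j θt + (n : ℝ)⁻¹ • ∑ i, f i θt - (n : ℝ)⁻¹ • ∑ i, f i θ
      = g j - (n : ℝ)⁻¹ • ∑ i, g i := fun j => by
    simp only [g, sum_sub_distrib, smul_sub]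
    abel
  have hpair : ∀ i j, ‖g i - g j‖ ≤ 2 * Bf * ‖θ - θt‖ := fun i j => calc
    ‖g i - g j‖ ≤ ‖g i‖ + ‖g j‖ := norm_sub_le _ _
    _ ≤ Bf * ‖θ - θt‖ + Bf * ‖θ - θt‖ := add_le_add (hLip i θ θt) (hLip j θ θt)
    _ = 2 * Bf * ‖θ - θt‖ := by ring
  simp_rw [hcentred]
  calc (n : ℝ)⁻¹ * ∑ j, ‖g j - (n : ℝ)⁻¹ • ∑ i, g i‖ ^ 2
      ≤ (1 - (n : ℝ)⁻¹) * (2 * Bf * ‖θ - θt‖) ^ 2 / 2 := by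
        simpa using inv_card_mul_sum_norm_sub_average_sq_le g hpair
    _ = 2 * Bf ^ 2 * (1 - (n : ℝ)⁻¹) * ‖θ - θt‖ ^ 2 := by ring

/-- Variance bound for the SVRG correction term: if each `f j` is `B_f`-Lipschitz and
`f̄` is their average, then for uniformly random `J`,
`E‖f_J(θ) − f_J(θ̃) + f̄(θ̃) − f̄(θ)‖² ≤ 2 B_f² (1 − 1/n) ‖θ − θ̃‖²`. -/
theorem svrg_correction_variance_bound {d l n : ℕ} (hn : 0 < n)
    (f : Fin n → EuclideanSpace ℝ (Fin d) → EuclideanSpace ℝ (Fin l))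
    (Bf : ℝ)
    (hLip : ∀ (j : Fin n) (θ₁ θ₂ : EuclideanSpace ℝ (Fin d)),
      ‖f j θ₁ - f j θ₂‖ ≤ Bf * ‖θ₁ - θ₂‖)
    (θ θt : EuclideanSpace ℝ (Fin d)) :
    (n : ℝ)⁻¹ * ∑ j : Fin n,
        ‖f j θ - f j θt + (n : ℝ)⁻¹ • ∑ i : Fin n, f i θt
          - (n : ℝ)⁻¹ • ∑ i : Fin n, f i θ‖ ^ 2
      ≤ 2 * Bf ^ 2 * (1 - (n : ℝ)⁻¹) * ‖θ - θt‖ ^ 2 :=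
  svrg_correction_variance_bound_general f Bf hLip θ θt
end
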